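/- The injective crossed product is the maximal injective crossed product functor: if ⋊_μ is any crossed product functor for G that takes injective equivariant *-homomorphisms to injective *-homomorphisms, then ‖a‖_μ ≤ ‖a‖_inj for all a ∈ C_c(G,A) and all G-C*-algebras A; equivalently the identity on C_c(G,A) extends to a surjection A⋊_inj G → A⋊_μ G. -/

import Mathlib

open Function

/-- A point-norm continuous action of a topological group `G` on a (non-unital) C⋆-algebra `A`
by ⋆-automorphisms. -/
structure GAct (G : Type) [Monoid G] [TopologicalSpace G]
    (A : Type) [NonUnitalCStarAlgebra A] : Type where
  act : G → A → A
  act_one : ∀ a, act 1 a = a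
  act_mul : ∀ g h a, act (g * h) a = act g (act h a)
  map_add : ∀ g a b, act g (a + b) = act g a + act g b
  map_smul : ∀ g (c : ℂ) a, act g (c • a) = c • act g a
  map_mul : ∀ g a b, act g (a * b) = act g a * act g b
  map_star : ∀ g a, act g (star a) = star (act g a)
  isometry : ∀ g a, ‖act g a‖ = ‖a‖
  cont : ∀ a, Continuous fun g => act g a

section maps

variable {G : Type} [Monoid G] [TopologicalSpace G]
variable {A B : Type} [NonUnitalCStarAlgebra A] [NonUnitalCStarAlgebra B]

/-- A contractive completely positive (ccp) map between C⋆-algebras: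
linear, contractive, and positive at all matrix levels (where an element of a
C⋆-algebra is positive iff it is of the form `star y * y`). -/
def IsCcp (φ : A → B) : Prop :=
  (∀ a b, φ (a + b) = φ a + φ b) ∧ (∀ (c : ℂ) (a : A), φ (c • a) = c • φ a) ∧
  (∀ a, ‖φ a‖ ≤ ‖a‖) ∧
  ∀ (n : ℕ) (M : Matrix (Fin n) (Fin n) A),
    (∃ N : Matrix (Fin n) (Fin n) A, M = star N * N) →
      ∃ N' : Matrix (Fin n) (Fin n) B, M.map φ = star N' * N'

/-- A ⋆-homomorphism, as a predicate on functions. -/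
def IsStarHom (φ : A → B) : Prop :=
  (∀ a b, φ (a + b) = φ a + φ b) ∧ (∀ (c : ℂ) (a : A), φ (c • a) = c • φ a) ∧
  (∀ a b, φ (a * b) = φ a * φ b) ∧ (∀ a, φ (star a) = star (φ a))

/-- Equivariance of a map with respect to given actions. -/
def Equivariant (α : GAct G A) (β : GAct G B) (φ : A → B) : Prop :=
  ∀ g a, φ (α.act g a) = β.act g (φ a)

/-- A `G`-equivariant injective ⋆-homomorphism (an equivariant embedding). -/
def IsGEmbedding (α : GAct G A) (β : GAct G B) (φ : A → B) : Prop :=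
  IsStarHom φ ∧ Injective φ ∧ Equivariant α β φ

/-- A map `φ : A → B` is `G`-injective if it extends to an equivariant ccp map along every
equivariant embedding of `A` into another `G`-C⋆-algebra. -/
def GInjectiveMap (α : GAct G A) (β : GAct G B) (φ : A → B) : Prop :=
  ∀ (C : Type) (_ : NonUnitalCStarAlgebra C) (γ : GAct G C) (ι : A → C),
    IsGEmbedding α γ ι →
    ∃ ψ : C → B, IsCcp ψ ∧ Equivariant γ β ψ ∧ ψ ∘ ι = φ

/-- A `G`-C⋆-algebra `B` is `G`-injective if every equivariant ccp map into it is
`G`-injective. -/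
def GInjectiveAlg (β : GAct G B) : Prop :=
  ∀ (A' : Type) (_ : NonUnitalCStarAlgebra A') (α : GAct G A') (φ : A' → B),
    IsCcp φ → Equivariant α β φ → GInjectiveMap α β φ

/-- Membership in the algebraic crossed product `C_c(G,A)`: continuous compactly
supported `A`-valued functions on `G`. -/
def CcFun (f : G → A) : Prop :=
  Continuous f ∧ HasCompactSupport f

end maps

section norms

variable (G : Type) [Monoid G] [TopologicalSpace G]

/-- The type of assignments of a crossed-product norm (such as `‖·‖_max` or `‖·‖_r`) to every
`G`-C⋆-algebra; the norm is recorded as a function on all of `G → A`, thought of as restricted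
to `C_c(G,A)`. -/
abbrev CPNorm : Type 1 :=
  ∀ (A : Type) [_inst : NonUnitalCStarAlgebra A], GAct G A → (G → A) → ℝ

variable {G}

/-- Functoriality of a crossed-product norm assignment for equivariant ccp maps:
an equivariant ccp map `ψ` induces a contraction on crossed products.  This is the
characteristic property of the maximal crossed product (functoriality for ccp maps)
which is used throughout the construction of the maximal injective crossed product. -/
def CcpFunctorial (N : CPNorm G) : Prop :=
  ∀ (A : Type) (_ : NonUnitalCStarAlgebra A) (B : Type) (_ : NonUnitalCStarAlgebra B)
    (α : GAct G A) (β : GAct G B) (ψ : A → B), IsCcp ψ → Equivariant α β ψ →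
    ∀ f : G → A, CcFun f → N B β (ψ ∘ f) ≤ N A α f

/-- The injective crossed-product norm associated to a given (maximal) crossed-product
norm assignment: the infimum over all equivariant embeddings `ι : A → B` of the norm of
the image of `f ∈ C_c(G,A)` in `B ⋊_max G`. -/
noncomputable def injNorm (maxN : CPNorm G) (A : Type) [NonUnitalCStarAlgebra A]
    (α : GAct G A) (f : G → A) : ℝ :=
  sInf { r : ℝ | ∃ (B : Type) (_ : NonUnitalCStarAlgebra B) (β : GAct G B) (ι : A → B),
    IsGEmbedding α β ι ∧ r = maxN B β (ι ∘ f) }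

end norms

section embeddings

variable {A B : Type} [NonUnitalCStarAlgebra A] [NonUnitalCStarAlgebra B]

theorem IsStarHom.map_zero {φ : A → B} (hφ : IsStarHom φ) : φ 0 = 0 := by
  simpa using hφ.1 0 0

def IsStarHom.toNonUnitalStarAlgHom {φ : A → B} (hφ : IsStarHom φ) : A →⋆ₙₐ[ℂ] B where
  toFun := φ
  map_smul' := hφ.2.1
  map_zero' := hφ.map_zero
  map_add' := hφ.1
  map_mul' := hφ.2.2.1
  map_star' := hφ.2.2.2

variable {G : Type} [TopologicalSpace G]

theorem CcFun.comp_left {f : G → A} (hf : CcFun f) {φ : A → B} (hφ : Continuous φ)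
    (hφ0 : φ 0 = 0) : CcFun (φ ∘ f) :=
  ⟨hφ.comp hf.1, hf.2.comp_left hφ0⟩

variable [Monoid G]

theorem IsGEmbedding.id (α : GAct G A) : IsGEmbedding α α id :=
  ⟨⟨fun _ _ => rfl, fun _ _ => rfl, fun _ _ => rfl, fun _ => rfl⟩, injective_id, fun _ _ => rfl⟩

theorem IsGEmbedding.continuous {α : GAct G A} {β : GAct G B} {ι : A → B}
    (hι : IsGEmbedding α β ι) : Continuous ι :=
  (NonUnitalStarAlgHom.isometry hι.1.toNonUnitalStarAlgHom hι.2.1).continuous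

theorem CcFun.comp_isGEmbedding {f : G → A} (hf : CcFun f) {α : GAct G A} {β : GAct G B}
    {ι : A → B} (hι : IsGEmbedding α β ι) : CcFun (ι ∘ f) :=
  hf.comp_left hι.continuous hι.1.map_zero

theorem le_injNorm (maxN : CPNorm G) (α : GAct G A) (f : G → A) {c : ℝ}
    (hc : ∀ (B : Type) (_ : NonUnitalCStarAlgebra B) (β : GAct G B) (ι : A → B),
      IsGEmbedding α β ι → c ≤ maxN B β (ι ∘ f)) :
    c ≤ injNorm maxN A α f :=
  le_csInf ⟨_, A, _, α, id, IsGEmbedding.id α, rfl⟩ fun _ ⟨B, _, β, ι, hι, hr⟩ =>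
    hr ▸ hc B _ β ι hι

end embeddings

theorem injNorm_is_maximal_injective_general
    {G : Type} [Group G] [TopologicalSpace G]
    (maxN : CPNorm G)
    (muN : CPNorm G)
    (hmu_le_max : ∀ (A : Type) (_ : NonUnitalCStarAlgebra A) (α : GAct G A)
      (f : G → A), CcFun f → muN A α f ≤ maxN A α f)
    (hmu_inj : ∀ (A : Type) (_ : NonUnitalCStarAlgebra A) (B : Type)
      (_ : NonUnitalCStarAlgebra B) (α : GAct G A) (β : GAct G B) (ι : A → B),
      IsGEmbedding α β ι → ∀ f : G → A, CcFun f → muN B β (ι ∘ f) = muN A α f)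
    {A : Type} [NonUnitalCStarAlgebra A] (α : GAct G A) :
    ∀ f : G → A, CcFun f → muN A α f ≤ injNorm maxN A α f := by
  intro f hf
  refine le_injNorm maxN α f fun B _ β ι hι => ?_
  calc muN A α f = muN B β (ι ∘ f) := (hmu_inj A _ B _ α β ι hι f hf).symm
    _ ≤ maxN B β (ι ∘ f) := hmu_le_max B _ β _ (hf.comp_isGEmbedding hι)

/-- `⋊_inj` is the maximal injective crossed-product functor: if `⋊_μ` is any
crossed-product functor for `G` (a norm assignment dominated by the maximal norm, functorial for
equivariant ⋆-homomorphisms) which is injective (it takes equivariant embeddings to injective,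
i.e. isometric, ⋆-homomorphisms), then `‖a‖_μ ≤ ‖a‖_inj` for all `a ∈ C_c(G,A)`; equivalently
the identity on `C_c(G,A)` extends to a surjection `A ⋊_inj G → A ⋊_μ G`. -/
theorem injNorm_is_maximal_injective
    {G : Type} [Group G] [TopologicalSpace G] [IsTopologicalGroup G] [LocallyCompactSpace G]
    (maxN : CPNorm G) (hmax : CcpFunctorial maxN)
    (muN : CPNorm G)
    (hmu_le_max : ∀ (A : Type) (_ : NonUnitalCStarAlgebra A) (α : GAct G A)
      (f : G → A), CcFun f → muN A α f ≤ maxN A α f)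
    (hmu_func : ∀ (A : Type) (_ : NonUnitalCStarAlgebra A) (B : Type)
      (_ : NonUnitalCStarAlgebra B) (α : GAct G A) (β : GAct G B) (φ : A → B),
      IsStarHom φ → Equivariant α β φ → ∀ f : G → A, CcFun f →
        muN B β (φ ∘ f) ≤ muN A α f)
    (hmu_inj : ∀ (A : Type) (_ : NonUnitalCStarAlgebra A) (B : Type)
      (_ : NonUnitalCStarAlgebra B) (α : GAct G A) (β : GAct G B) (ι : A → B),
      IsGEmbedding α β ι → ∀ f : G → A, CcFun f → muN B β (ι ∘ f) = muN A α f)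
    {A : Type} [NonUnitalCStarAlgebra A] (α : GAct G A) :
    ∀ f : G → A, CcFun f → muN A α f ≤ injNorm maxN A α f :=
  injNorm_is_maximal_injective_general maxN muN hmu_le_max hmu_inj α
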